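/- arXiv:1605.06767 — 2 statements merged into one kernel-verified Lean document; each statement's English description precedes it below -/
import Mathlib

section
/- The Dirichlet coalgebra Dir is isomorphic, as a coalgebra, to the polynomial coalgebra k[{X_i : i ∈ ℕ}] on countably many primitive-free (divided-type) generators, via the map z_n ↦ X_{o(p_1)} ⋯ X_{o(p_s)} where n = p_1 ⋯ p_s is the prime factorization of n (with multiplicity) and o(p) is the index of the prime p in the increasing enumeration of primes. -/
open TensorProduct

/-!
Sending `n` to the exponent vector of its prime factorization, reindexed along the enumeration
of the primes, is a bijection `e : ℕ+ ≃ (ℕ →₀ ℕ)` turning products into sums. Hence `e × e` maps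
the factorizations `a * b = n` bijectively onto the decompositions `e a + e b = e n`, so the
linear extension of `e` carries the comultiplication of `Dir` to that of the polynomial
coalgebra, and `e n = 0 ↔ n = 1` does the same for the counits.
-/

namespace PNat

noncomputable def primeExponents (n : ℕ+) : ℕ →₀ ℕ :=
  Finsupp.mapDomain (Nat.count Nat.Prime) (n : ℕ).factorization

lemma prime_of_mem_support_mapDomain_nth (f : ℕ →₀ ℕ) :
    ∀ p ∈ (Finsupp.mapDomain (Nat.nth Nat.Prime) f).support, p.Prime := by
  classical
  intro p hp
  obtain ⟨i, -, rfl⟩ := Finset.mem_image.mp (Finsupp.mapDomain_support hp)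
  exact Nat.prime_nth_prime i

noncomputable def ofPrimeExponents (f : ℕ →₀ ℕ) : ℕ+ :=
  ⟨(Finsupp.mapDomain (Nat.nth Nat.Prime) f).prod (· ^ ·),
    Finset.prod_pos fun p hp => pow_pos (prime_of_mem_support_mapDomain_nth f p hp).pos _⟩

lemma primeExponents_ofPrimeExponents (f : ℕ →₀ ℕ) :
    primeExponents (ofPrimeExponents f) = f := by
  have hfactorization : ((ofPrimeExponents f : ℕ+) : ℕ).factorization =
      Finsupp.mapDomain (Nat.nth Nat.Prime) f :=
    Nat.prod_pow_factorization_eq_self (prime_of_mem_support_mapDomain_nth f)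
  have hcount_nth : Nat.count Nat.Prime ∘ Nat.nth Nat.Prime = id :=
    funext (Nat.count_nth_of_infinite Nat.infinite_setOfPred_prime)
  rw [primeExponents, hfactorization, ← Finsupp.mapDomain_comp, hcount_nth, Finsupp.mapDomain_id]

lemma ofPrimeExponents_primeExponents (n : ℕ+) : ofPrimeExponents (primeExponents n) = n := by
  apply PNat.coe_injective
  change (Finsupp.mapDomain (Nat.nth Nat.Prime) (primeExponents n)).prod (· ^ ·) = (n : ℕ)
  rw [primeExponents, ← Finsupp.mapDomain_comp,
    Finsupp.mapDomain_congr (g := id) fun p hp => by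
      exact Nat.nth_count (Nat.prime_of_mem_primeFactors hp),
    Finsupp.mapDomain_id]
  exact Nat.prod_factorization_pow_eq_self n.ne_zero

noncomputable def primeExponentsEquiv : ℕ+ ≃ (ℕ →₀ ℕ) :=
  ⟨primeExponents, ofPrimeExponents, ofPrimeExponents_primeExponents,
    primeExponents_ofPrimeExponents⟩

lemma primeExponents_mul (a b : ℕ+) :
    primeExponents (a * b) = primeExponents a + primeExponents b := by
  simp only [primeExponents, PNat.mul_coe, Nat.factorization_mul a.ne_zero b.ne_zero,
    Finsupp.mapDomain_add]

lemma primeExponents_one : primeExponents 1 = 0 := by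
  simp [primeExponents]

end PNat

lemma Nat.coe_toPNat'_of_mem_divisorsAntidiagonal {n : ℕ} {p : ℕ × ℕ}
    (hp : p ∈ Nat.divisorsAntidiagonal n) :
    (p.1.toPNat' : ℕ) = p.1 ∧ (p.2.toPNat' : ℕ) = p.2 :=
  ⟨PNat.toPNat'_coe (Nat.pos_of_mem_divisors (Nat.fst_mem_divisors_of_mem_antidiagonal hp)),
    PNat.toPNat'_coe (Nat.pos_of_mem_divisors (Nat.snd_mem_divisors_of_mem_antidiagonal hp))⟩

lemma Nat.toPNat'_mul_toPNat'_of_mem_divisorsAntidiagonal {n : ℕ+} {p : ℕ × ℕ}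
    (hp : p ∈ Nat.divisorsAntidiagonal n) : p.1.toPNat' * p.2.toPNat' = n := by
  obtain ⟨h₁, h₂⟩ := Nat.coe_toPNat'_of_mem_divisorsAntidiagonal hp
  apply PNat.coe_injective
  rw [PNat.mul_coe, h₁, h₂, (Nat.mem_divisorsAntidiagonal.mp hp).1]

lemma Nat.sum_divisorsAntidiagonal_eq_sum_antidiagonal {A M : Type*} [AddCommMonoid A]
    [Finset.HasAntidiagonal A] [AddCommMonoid M] (e : ℕ+ ≃ A)
    (he : ∀ a b, e (a * b) = e a + e b) (g : A → A → M) (n : ℕ+) :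
    ∑ p ∈ Nat.divisorsAntidiagonal n, g (e p.1.toPNat') (e p.2.toPNat') =
      ∑ q ∈ Finset.HasAntidiagonal.antidiagonal (e n), g q.1 q.2 := by
  refine Finset.sum_nbij' (fun p => (e p.1.toPNat', e p.2.toPNat'))
    (fun q => ((e.symm q.1 : ℕ), (e.symm q.2 : ℕ))) ?_ ?_ ?_ ?_ fun _ _ => rfl
  · intro p hp
    rw [Finset.HasAntidiagonal.mem_antidiagonal, ← he,
      Nat.toPNat'_mul_toPNat'_of_mem_divisorsAntidiagonal hp]
  · intro q hq
    rw [Finset.HasAntidiagonal.mem_antidiagonal] at hq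
    have hmul : e.symm q.1 * e.symm q.2 = n :=
      e.injective (by rw [he, e.apply_symm_apply, e.apply_symm_apply, hq])
    exact Nat.mem_divisorsAntidiagonal.mpr ⟨by rw [← PNat.mul_coe, hmul], n.ne_zero⟩
  · intro p hp
    obtain ⟨h₁, h₂⟩ := Nat.coe_toPNat'_of_mem_divisorsAntidiagonal hp
    simp only [Equiv.symm_apply_apply, h₁, h₂]
  · intro q _
    simp only [PNat.coe_toPNat', Equiv.apply_symm_apply]

/-- The Dirichlet coalgebra `Dir` is isomorphic, as a coalgebra, to the
polynomial coalgebra `k[{X_i : i ∈ ℕ}]` on countably many divided-type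
generators (monomials `m` satisfy `Δ(m) = ∑_{m₁+m₂=m} m₁ ⊗ m₂`), via
`z_n ↦ X_{o(p_1)} ⋯ X_{o(p_s)}` where `n = p_1 ⋯ p_s` is the prime
factorization of `n` and `o(p)` is the index of `p` in the increasing
enumeration of the primes.  Monomials in the `X_i` are modelled by their
exponent vectors `ℕ →₀ ℕ`, and the image of `z_n` is the monomial with
exponent vector the prime factorization of `n` transported along `o`. -/
theorem dirichlet_coalgebra_iso_polynomial_coalgebra (k : Type*) [Field k]
    -- the Dirichlet coalgebra Dir, with basis {zₙ = single n 1, n ∈ ℕ = {1,2,...}}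
    (ΔD : (ℕ+ →₀ k) →ₗ[k] (ℕ+ →₀ k) ⊗[k] (ℕ+ →₀ k)) (εD : (ℕ+ →₀ k) →ₗ[k] k)
    (hΔD : ∀ n : ℕ+, ΔD (Finsupp.single n 1) =
      ∑ p ∈ Nat.divisorsAntidiagonal (n : ℕ),
        Finsupp.single p.1.toPNat' (1 : k) ⊗ₜ[k] Finsupp.single p.2.toPNat' (1 : k))
    (hεD : ∀ n : ℕ+, εD (Finsupp.single n 1) = if n = 1 then 1 else 0)
    -- the polynomial coalgebra k[{X_i : i ∈ ℕ}], with basis the monomials,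
    -- indexed by exponent vectors m : ℕ →₀ ℕ
    (ΔP : ((ℕ →₀ ℕ) →₀ k) →ₗ[k] ((ℕ →₀ ℕ) →₀ k) ⊗[k] ((ℕ →₀ ℕ) →₀ k))
    (εP : ((ℕ →₀ ℕ) →₀ k) →ₗ[k] k)
    (hΔP : ∀ m : ℕ →₀ ℕ, ΔP (Finsupp.single m 1) =
      ∑ p ∈ Finset.HasAntidiagonal.antidiagonal m,
        Finsupp.single p.1 (1 : k) ⊗ₜ[k] Finsupp.single p.2 (1 : k))
    (hεP : ∀ m : ℕ →₀ ℕ, εP (Finsupp.single m 1) = if m = 0 then 1 else 0) :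
    ∃ Φ : (ℕ+ →₀ k) ≃ₗ[k] ((ℕ →₀ ℕ) →₀ k),
      (∀ n : ℕ+, Φ (Finsupp.single n 1) =
        Finsupp.single
          (Finsupp.mapDomain (Nat.count Nat.Prime) (Nat.factorization (n : ℕ))) 1) ∧
      (∀ m : ℕ+ →₀ k,
        TensorProduct.map Φ.toLinearMap Φ.toLinearMap (ΔD m) = ΔP (Φ m)) ∧
      (∀ m : ℕ+ →₀ k, εP (Φ m) = εD m) := by
  let e := PNat.primeExponentsEquiv
  let Φ : (ℕ+ →₀ k) ≃ₗ[k] ((ℕ →₀ ℕ) →₀ k) := Finsupp.domLCongr e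
  have hΦ (n : ℕ+) : Φ (Finsupp.single n 1) = Finsupp.single (e n) 1 :=
    Finsupp.domLCongr_single e n 1
  have hΔ :
      TensorProduct.map Φ.toLinearMap Φ.toLinearMap ∘ₗ ΔD = ΔP ∘ₗ Φ.toLinearMap :=
    Finsupp.basisSingleOne.ext fun n => by
      simp only [Finsupp.coe_basisSingleOne, LinearMap.comp_apply, LinearEquiv.coe_coe, hΔD,
        hΦ, hΔP, map_sum, TensorProduct.map_tmul]
      exact Nat.sum_divisorsAntidiagonal_eq_sum_antidiagonal e PNat.primeExponents_mul
        (fun a b => Finsupp.single a (1 : k) ⊗ₜ[k] Finsupp.single b (1 : k)) n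
  have hε : εP ∘ₗ Φ.toLinearMap = εD :=
    Finsupp.basisSingleOne.ext fun n => by
      simp only [Finsupp.coe_basisSingleOne, LinearMap.comp_apply, LinearEquiv.coe_coe, hΦ, hεP,
        hεD, e.injective.eq_iff' PNat.primeExponents_one]
  exact ⟨Φ, hΦ, LinearMap.congr_fun hΔ, LinearMap.congr_fun hε⟩
end

section
/- Dir_{(m+1)} is isomorphic to Dir_{(m)} ⊗ k[X_{m+1}] as a left Dir_{(m)}-comodule (with coaction induced by the comultiplication of Dir_{(m)} on the left tensor factor); in particular Dir_{(m+1)} is a cofree, hence coflat, left Dir_{(m)}-comodule. -/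
/-!
Splitting off the exponent of the last variable identifies the monomials of `Dir_{(m+1)}` with
pairs (monomial of `Dir_{(m)}`, power of `X_{m+1}`), hence `Dir_{(m+1)} ≅ Dir_{(m)} ⊗ k[X_{m+1}]`.
A splitting `a = p₁ + p₂` of a monomial survives `π_m ⊗ id` exactly when `p₁` avoids `X_{m+1}`,
i.e. when all of the power of `X_{m+1}` goes to `p₂`; such splittings correspond bijectively to
splittings of the `Dir_{(m)}`-part of `a`, which is the coaction `Δ_{(m)} ⊗ id` on the right.
-/

open TensorProduct Finset

namespace Finsupp

section Zero

variable {n : ℕ} {M : Type*} [Zero M]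

noncomputable def init (t : Fin (n + 1) →₀ M) : Fin n →₀ M :=
  comapDomain Fin.castSucc t (Fin.castSucc_injective n).injOn

@[simp]
theorem init_apply (t : Fin (n + 1) →₀ M) (i : Fin n) : init t i = t i.castSucc :=
  rfl

end Zero

section AddZeroClass

variable {n : ℕ} {M : Type*} [AddZeroClass M]

noncomputable def snoc (s : Fin n →₀ M) (y : M) : Fin (n + 1) →₀ M :=
  embDomain Fin.castSuccEmb s + single (Fin.last n) y

@[simp]
theorem snoc_castSucc (s : Fin n →₀ M) (y : M) (i : Fin n) : snoc s y i.castSucc = s i := by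
  simpa [snoc, (Fin.castSucc_lt_last i).ne'] using embDomain_apply_self Fin.castSuccEmb s i

@[simp]
theorem snoc_last (s : Fin n →₀ M) (y : M) : snoc s y (Fin.last n) = y := by
  have : Fin.last n ∉ Set.range Fin.castSuccEmb := by
    rintro ⟨i, hi⟩
    exact (Fin.castSucc_lt_last i).ne hi
  simp [snoc, embDomain_of_notMem_range _ _ _ this]

@[simp]
theorem init_snoc (s : Fin n →₀ M) (y : M) : init (snoc s y) = s := by
  ext i
  simp

@[simp]
theorem snoc_init_self (t : Fin (n + 1) →₀ M) : snoc (init t) (t (Fin.last n)) = t := by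
  ext i
  induction i using Fin.lastCases <;> simp

theorem snoc_add (s s' : Fin n →₀ M) (y y' : M) :
    snoc (s + s') (y + y') = snoc s y + snoc s' y' := by
  ext i
  induction i using Fin.lastCases <;> simp

theorem init_add (t t' : Fin (n + 1) →₀ M) : init (t + t') = init t + init t' := by
  ext i
  simp

noncomputable def snocEquiv : (Fin n →₀ M) × M ≃ (Fin (n + 1) →₀ M) where
  toFun p := snoc p.1 p.2
  invFun t := (init t, t (Fin.last n))
  left_inv p := by simp
  right_inv t := snoc_init_self t

end AddZeroClass

variable (R : Type*) [CommSemiring R] (n : ℕ) (M : Type*) [AddZeroClass M]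

noncomputable def snocTensorEquiv :
    ((Fin (n + 1) →₀ M) →₀ R) ≃ₗ[R] ((Fin n →₀ M) →₀ R) ⊗[R] (M →₀ R) :=
  Finsupp.domLCongr snocEquiv.symm ≪≫ₗ (finsuppTensorFinsupp' R (Fin n →₀ M) M).symm

variable {R n M}

@[simp]
theorem snocTensorEquiv_single (t : Fin (n + 1) →₀ M) (r : R) :
    snocTensorEquiv R n M (single t r) = single (init t) r ⊗ₜ single (t (Fin.last n)) 1 := by
  simp [snocTensorEquiv, snocEquiv, finsuppTensorFinsupp'_symm_single_eq_tmul_single_one]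

theorem sum_antidiagonal_filter_last_eq_zero {β : Type*} [AddCommMonoid β]
    (a : Fin (n + 1) →₀ ℕ) (f : (Fin n →₀ ℕ) → (Fin n →₀ ℕ) → ℕ → β) :
    ∑ p ∈ antidiagonal a with p.1 (Fin.last n) = 0, f (init p.1) (init p.2) (p.2 (Fin.last n)) =
      ∑ q ∈ antidiagonal (init a), f q.1 q.2 (a (Fin.last n)) := by
  have last_snd : ∀ p ∈ {p ∈ antidiagonal a | p.1 (Fin.last n) = 0},
      p.2 (Fin.last n) = a (Fin.last n) := by
    rintro ⟨p₁, p₂⟩ hp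
    rw [mem_filter, HasAntidiagonal.mem_antidiagonal] at hp
    simp [← hp.1, hp.2]
  refine sum_nbij' (fun p ↦ (init p.1, init p.2))
    (fun q ↦ (snoc q.1 0, snoc q.2 (a (Fin.last n)))) ?_ ?_ ?_ ?_ ?_
  · rintro ⟨p₁, p₂⟩ hp
    rw [mem_filter, HasAntidiagonal.mem_antidiagonal] at hp
    rw [HasAntidiagonal.mem_antidiagonal, ← init_add, hp.1]
  · rintro ⟨q₁, q₂⟩ hq
    rw [HasAntidiagonal.mem_antidiagonal] at hq
    rw [mem_filter, HasAntidiagonal.mem_antidiagonal, ← snoc_add, hq, zero_add, snoc_init_self]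
    exact ⟨rfl, snoc_last _ _⟩
  · rintro ⟨p₁, p₂⟩ hp
    have hp₁ : p₁ (Fin.last n) = 0 := (mem_filter.mp hp).2
    rw [← last_snd _ hp, ← hp₁]
    simp
  · rintro ⟨q₁, q₂⟩ -
    simp
  · rintro p hp
    rw [last_snd p hp]

end Finsupp

open Finsupp

theorem dirichlet_truncation_cofree_comodule_general (k : Type*) [Field k]
    (m : ℕ)
    -- Dir_{(m)}
    (Δm : ((Fin m →₀ ℕ) →₀ k) →ₗ[k] ((Fin m →₀ ℕ) →₀ k) ⊗[k] ((Fin m →₀ ℕ) →₀ k))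
    (hΔm : ∀ a : Fin m →₀ ℕ, Δm (Finsupp.single a 1) =
      ∑ p ∈ Finset.HasAntidiagonal.antidiagonal a,
        Finsupp.single p.1 (1 : k) ⊗ₜ[k] Finsupp.single p.2 (1 : k))
    -- Dir_{(m+1)}
    (Δm1 : ((Fin (m + 1) →₀ ℕ) →₀ k) →ₗ[k]
      ((Fin (m + 1) →₀ ℕ) →₀ k) ⊗[k] ((Fin (m + 1) →₀ ℕ) →₀ k))
    (hΔm1 : ∀ a : Fin (m + 1) →₀ ℕ, Δm1 (Finsupp.single a 1) =
      ∑ p ∈ Finset.HasAntidiagonal.antidiagonal a,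
        Finsupp.single p.1 (1 : k) ⊗ₜ[k] Finsupp.single p.2 (1 : k))
    -- the projection π_m
    (π : ((Fin (m + 1) →₀ ℕ) →₀ k) →ₗ[k] ((Fin m →₀ ℕ) →₀ k))
    (hπ : ∀ a : Fin (m + 1) →₀ ℕ, π (Finsupp.single a 1) =
      if a (Fin.last m) = 0 then
        Finsupp.single
          (Finsupp.comapDomain Fin.castSucc a ((Fin.castSucc_injective m).injOn)) 1
      else 0) :
    ∃ Φ : ((Fin (m + 1) →₀ ℕ) →₀ k) ≃ₗ[k] ((Fin m →₀ ℕ) →₀ k) ⊗[k] (ℕ →₀ k),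
      -- Φ sends the monomial (embedded b)·X_{m+1}^e to (monomial b) ⊗ X_{m+1}^e
      (∀ (b : Fin m →₀ ℕ) (e : ℕ),
        Φ (Finsupp.single (Finsupp.embDomain Fin.castSuccEmb b +
            Finsupp.single (Fin.last m) e) 1) =
          Finsupp.single b (1 : k) ⊗ₜ[k] Finsupp.single e (1 : k)) ∧
      -- Φ is a map of left Dir_{(m)}-comodules
      (∀ x : (Fin (m + 1) →₀ ℕ) →₀ k,
        TensorProduct.map LinearMap.id Φ.toLinearMap
            (TensorProduct.map π LinearMap.id (Δm1 x)) =
          (TensorProduct.assoc k ((Fin m →₀ ℕ) →₀ k) ((Fin m →₀ ℕ) →₀ k) (ℕ →₀ k))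
            (TensorProduct.map Δm LinearMap.id (Φ x))) := by
  set Φ := snocTensorEquiv k m ℕ
  refine ⟨Φ, fun b e ↦ ?_, fun x ↦ ?_⟩
  · exact (snocTensorEquiv_single (snoc b e) 1).trans (by simp)
  · suffices comodule : map LinearMap.id Φ.toLinearMap ∘ₗ map π LinearMap.id ∘ₗ Δm1 =
        (TensorProduct.assoc k _ _ _).toLinearMap ∘ₗ map Δm LinearMap.id ∘ₗ Φ.toLinearMap from
      LinearMap.congr_fun comodule x
    refine lhom_ext' fun a ↦ LinearMap.ext_ring ?_
    have hπ_init (a) : π (single a 1) = if a (Fin.last m) = 0 then single (init a) 1 else 0 := hπ a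
    simp only [LinearMap.coe_comp, Function.comp_apply, lsingle_apply, hΔm1, map_sum, map_tmul,
      hπ_init, LinearMap.id_coe, id_eq, ite_tmul, apply_ite (map _ _), LinearEquiv.coe_coe,
      snocTensorEquiv_single, map_zero, hΔm, sum_tmul, assoc_tmul, Φ]
    rw [← sum_filter]
    exact sum_antidiagonal_filter_last_eq_zero a fun q₁ q₂ e ↦
      single q₁ 1 ⊗ₜ (single q₂ 1 ⊗ₜ single e 1)

/-- `Dir_{(m+1)}` is isomorphic to `Dir_{(m)} ⊗ k[X_{m+1}]` as a left
`Dir_{(m)}`-comodule, where the coaction on `Dir_{(m+1)}` is `(π_m ⊗ id) ∘ Δ`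
and the coaction on `Dir_{(m)} ⊗ k[X_{m+1}]` is induced by the comultiplication
of `Dir_{(m)}` on the left tensor factor; in particular `Dir_{(m+1)}` is a
cofree left `Dir_{(m)}`-comodule.  `Dir_{(m)}` is modelled by its monomial
basis `Fin m →₀ ℕ` with the divided-type coproduct, and `k[X_{m+1}]` by its
basis `{X_{m+1}^e : e ∈ ℕ}`. -/
theorem dirichlet_truncation_cofree_comodule (k : Type*) [Field k]
    (m : ℕ) (hm : 1 ≤ m)
    -- Dir_{(m)}
    (Δm : ((Fin m →₀ ℕ) →₀ k) →ₗ[k] ((Fin m →₀ ℕ) →₀ k) ⊗[k] ((Fin m →₀ ℕ) →₀ k))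
    (hΔm : ∀ a : Fin m →₀ ℕ, Δm (Finsupp.single a 1) =
      ∑ p ∈ Finset.HasAntidiagonal.antidiagonal a,
        Finsupp.single p.1 (1 : k) ⊗ₜ[k] Finsupp.single p.2 (1 : k))
    -- Dir_{(m+1)}
    (Δm1 : ((Fin (m + 1) →₀ ℕ) →₀ k) →ₗ[k]
      ((Fin (m + 1) →₀ ℕ) →₀ k) ⊗[k] ((Fin (m + 1) →₀ ℕ) →₀ k))
    (hΔm1 : ∀ a : Fin (m + 1) →₀ ℕ, Δm1 (Finsupp.single a 1) =
      ∑ p ∈ Finset.HasAntidiagonal.antidiagonal a,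
        Finsupp.single p.1 (1 : k) ⊗ₜ[k] Finsupp.single p.2 (1 : k))
    -- the projection π_m
    (π : ((Fin (m + 1) →₀ ℕ) →₀ k) →ₗ[k] ((Fin m →₀ ℕ) →₀ k))
    (hπ : ∀ a : Fin (m + 1) →₀ ℕ, π (Finsupp.single a 1) =
      if a (Fin.last m) = 0 then
        Finsupp.single
          (Finsupp.comapDomain Fin.castSucc a ((Fin.castSucc_injective m).injOn)) 1
      else 0) :
    ∃ Φ : ((Fin (m + 1) →₀ ℕ) →₀ k) ≃ₗ[k] ((Fin m →₀ ℕ) →₀ k) ⊗[k] (ℕ →₀ k),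
      -- Φ sends the monomial (embedded b)·X_{m+1}^e to (monomial b) ⊗ X_{m+1}^e
      (∀ (b : Fin m →₀ ℕ) (e : ℕ),
        Φ (Finsupp.single (Finsupp.embDomain Fin.castSuccEmb b +
            Finsupp.single (Fin.last m) e) 1) =
          Finsupp.single b (1 : k) ⊗ₜ[k] Finsupp.single e (1 : k)) ∧
      -- Φ is a map of left Dir_{(m)}-comodules
      (∀ x : (Fin (m + 1) →₀ ℕ) →₀ k,
        TensorProduct.map LinearMap.id Φ.toLinearMap
            (TensorProduct.map π LinearMap.id (Δm1 x)) =
          (TensorProduct.assoc k ((Fin m →₀ ℕ) →₀ k) ((Fin m →₀ ℕ) →₀ k) (ℕ →₀ k))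
            (TensorProduct.map Δm LinearMap.id (Φ x))) :=
  dirichlet_truncation_cofree_comodule_general k m Δm hΔm Δm1 hΔm1 π hπ
end
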